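/- arXiv:1704.02907 — 4 statements merged into one kernel-verified Lean document; each statement's English description precedes it below -/
import Mathlib

section
/- Let a > 0, b > 0, μ > 0 and define x* = (1/(2b)) · max{0, √(a² + (4/ln 2)·a·b·μ) − a − 2}. If μ > ln 2 · (1+a)/(a·b), then x* > 0 and (1/ln 2) · (a/b) / ((x* + 1/b)(x* + (a+1)/b)) = 1/μ. -/
/-! With `s = √(a² + 4abμ / ln 2)`, the candidate is `x* = (s - a - 2) / (2b)`, whose two shifted
factors are `x* + 1/b = (s - a)/(2b)` and `x* + (a+1)/b = (s + a)/(2b)`. Their product is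
`(s² - a²)/(4b²) = aμ / (b ln 2)`, which is exactly the stationarity equation. The threshold on `μ`
is equivalent to `s > a + 2`, i.e. to the `max` not being clipped at `0`. -/

lemma shifted_factors_mul (a b s : ℝ) (hb : b ≠ 0) :
    ((s - a - 2) / (2 * b) + 1 / b) * ((s - a - 2) / (2 * b) + (a + 1) / b) =
      (s ^ 2 - a ^ 2) / (4 * b ^ 2) := by
  field_simp
  ring

lemma add_two_lt_sqrt_of_lt {a b c μ : ℝ} (ha : 0 < a) (hb : 0 < b) (hc : 0 < c)
    (hμ : c * (1 + a) / (a * b) < μ) :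
    a + 2 < Real.sqrt (a ^ 2 + (4 / c) * a * b * μ) := by
  have hμ' : c * (1 + a) < μ * (a * b) := (div_lt_iff₀ (by positivity)).mp hμ
  have h4 : 4 * (1 + a) < (4 / c) * a * b * μ := by
    rw [div_mul_eq_mul_div, div_mul_eq_mul_div, div_mul_eq_mul_div, lt_div_iff₀ hc]
    nlinarith
  rw [Real.lt_sqrt (by positivity)]
  nlinarith

theorem stmt2_general (a b μ : ℝ) (ha : 0 < a) (hb : 0 < b)
    (hμbig : Real.log 2 * (1 + a) / (a * b) < μ)
    (x : ℝ)
    (hx : x = (1 / (2 * b)) * max 0 (Real.sqrt (a ^ 2 + (4 / Real.log 2) * a * b * μ) - a - 2)) :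
    0 < x ∧
    (1 / Real.log 2) * (a / b) / ((x + 1 / b) * (x + (a + 1) / b)) = 1 / μ := by
  have hL : 0 < Real.log 2 := Real.log_pos one_lt_two
  have hμ : 0 < μ := lt_trans (by positivity) hμbig
  have hs := add_two_lt_sqrt_of_lt ha hb hL hμbig
  set s := Real.sqrt (a ^ 2 + (4 / Real.log 2) * a * b * μ) with hs_def
  have hx' : x = (s - a - 2) / (2 * b) := by
    rw [hx, max_eq_right (by linarith)]
    ring
  refine ⟨hx' ▸ div_pos (by linarith) (by positivity), ?_⟩
  rw [hx', shifted_factors_mul a b s hb.ne', hs_def, Real.sq_sqrt (by positivity)]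
  field_simp
  ring

/-- the water-filling candidate x* is positive and satisfies the
stationarity equation h(x*) = 1/μ when μ > ln 2·(1+a)/(ab). -/
theorem stmt2 (a b μ : ℝ) (ha : 0 < a) (hb : 0 < b) (hμ : 0 < μ)
    (hμbig : Real.log 2 * (1 + a) / (a * b) < μ)
    (x : ℝ)
    (hx : x = (1 / (2 * b)) * max 0 (Real.sqrt (a ^ 2 + (4 / Real.log 2) * a * b * μ) - a - 2)) :
    0 < x ∧
    (1 / Real.log 2) * (a / b) / ((x + 1 / b) * (x + (a + 1) / b)) = 1 / μ :=
  stmt2_general a b μ ha hb hμbig x hx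
end

section
/- Let D ≥ 1, let a_k, b_k > 0 for k = 1,…,D, let E > 0, and for μ > 0 let x_k(μ) = (1/(2b_k)) max{0, √(a_k² + (4/ln2)a_k b_k μ) − a_k − 2}. Define l(μ) = −(1/2)Σ_k log₂[(1+a_k)(1+b_k x_k(μ))/(1+a_k+b_k x_k(μ))] + (1/μ)[E + (1/2)Σ_k x_k(μ)]. Then l is continuous, l(μ) > 0 for μ ≤ min_k ln2·(1+a_k)/(a_k b_k), l(μ) → −(1/2)Σ_k log₂(1+a_k) < 0 as μ → ∞, and there exists μ* ∈ (min_k ln2·(1+a_k)/(a_k b_k), ∞) with l(μ*) = 0. -/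
/-!
For `μ` up to the threshold `ln 2 · (1 + aₖ) / (aₖ bₖ)` every water-filling power `xₖ(μ)`
vanishes, so all rate terms are `log₂ 1 = 0` and `l μ = E / μ > 0`. As `μ → ∞` each `xₖ(μ)`
grows like `√μ`: the rate ratios tend to `1 + aₖ`, while `(E + Σ xₖ(μ)/2) / μ → 0`. Hence `l`
tends to a negative limit, and the intermediate value theorem gives a root past the threshold.
-/

open Filter Topology Set

noncomputable section

/-- The paper's `x(μ)` for a stream with gains `a`, `b`. -/
def streamPower (a b μ : ℝ) : ℝ :=
  (1 / (2 * b)) * max 0 (Real.sqrt (a ^ 2 + (4 / Real.log 2) * a * b * μ) - a - 2)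

section streamPower

variable {a b : ℝ}

lemma streamPower_nonneg (hb : 0 ≤ b) (μ : ℝ) : 0 ≤ streamPower a b μ :=
  mul_nonneg (by positivity) (le_max_left _ _)

lemma continuous_streamPower : Continuous (streamPower a b) := by
  unfold streamPower
  fun_prop

lemma streamPower_eq_zero (ha : 0 < a) (hb : 0 < b) {μ : ℝ}
    (hμ : μ ≤ Real.log 2 * (1 + a) / (a * b)) : streamPower a b μ = 0 := by
  have hlog2 : 0 < Real.log 2 := Real.log_pos one_lt_two
  have hμ' : a * b * μ ≤ Real.log 2 * (1 + a) := by
    rwa [le_div_iff₀ (mul_pos ha hb), mul_comm] at hμ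
  have hscaled : (4 / Real.log 2) * a * b * μ ≤ 4 * (1 + a) := by
    calc (4 / Real.log 2) * a * b * μ = (4 / Real.log 2) * (a * b * μ) := by ring
      _ ≤ (4 / Real.log 2) * (Real.log 2 * (1 + a)) := by gcongr
      _ = 4 * (1 + a) := by field_simp
  have hsqrt : Real.sqrt (a ^ 2 + (4 / Real.log 2) * a * b * μ) ≤ a + 2 :=
    (Real.sqrt_le_left (by linarith)).2 (by nlinarith)
  rw [streamPower, max_eq_left (by linarith), mul_zero]

lemma tendsto_streamPower_atTop (ha : 0 < a) (hb : 0 < b) :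
    Tendsto (streamPower a b) atTop atTop := by
  have hslope : 0 < (4 / Real.log 2) * a * b := by
    have := Real.log_pos one_lt_two
    positivity
  have hradicand : Tendsto (fun μ => a ^ 2 + (4 / Real.log 2) * a * b * μ) atTop atTop :=
    tendsto_atTop_add_const_left _ _ (tendsto_id.const_mul_atTop hslope)
  have hshifted : Tendsto (fun μ => Real.sqrt (a ^ 2 + (4 / Real.log 2) * a * b * μ) - a - 2)
      atTop atTop := by
    refine (tendsto_atTop_add_const_right _ (-(a + 2))
      (Real.tendsto_sqrt_atTop.comp hradicand)).congr fun μ => ?_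
    simp only [Function.comp_apply]
    ring
  exact (tendsto_atTop_mono (fun μ => le_max_right _ _) hshifted).const_mul_atTop
    (by positivity)

lemma tendsto_streamPower_div_atTop (ha : 0 ≤ a) (hb : 0 ≤ b) :
    Tendsto (fun μ => streamPower a b μ / μ) atTop (𝓝 0) := by
  set c := (4 / Real.log 2) * a * b
  -- `√(a² + c μ) / μ = √(a² / μ² + c / μ)` for `μ > 0`, and the right side tends to `√0`.
  have hsqrt_div : Tendsto (fun μ => Real.sqrt (a ^ 2 + c * μ) / μ) atTop (𝓝 0) := by
    have hinner : Tendsto (fun μ : ℝ => a ^ 2 * (μ ^ 2)⁻¹ + c * μ⁻¹) atTop (𝓝 0) := by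
      simpa using ((tendsto_inv_atTop_zero.comp (tendsto_pow_atTop two_ne_zero)).const_mul
        (a ^ 2)).add (tendsto_inv_atTop_zero.const_mul c)
    rw [← Real.sqrt_zero]
    refine ((Real.continuous_sqrt.tendsto 0).comp hinner).congr' ?_
    filter_upwards [eventually_gt_atTop 0] with μ hμ
    rw [Function.comp_apply, show a ^ 2 * (μ ^ 2)⁻¹ + c * μ⁻¹ = (a ^ 2 + c * μ) / μ ^ 2 by
      field_simp, Real.sqrt_div' _ (sq_nonneg μ), Real.sqrt_sq hμ.le]
  have hupper : Tendsto (fun μ => 1 / (2 * b) * (Real.sqrt (a ^ 2 + c * μ) / μ)) atTop (𝓝 0) := by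
    simpa using hsqrt_div.const_mul (1 / (2 * b))
  refine tendsto_of_tendsto_of_tendsto_of_le_of_le' tendsto_const_nhds hupper ?_ ?_
  · filter_upwards [eventually_ge_atTop 0] with μ hμ
    exact div_nonneg (streamPower_nonneg hb μ) hμ
  · filter_upwards [eventually_ge_atTop 0] with μ hμ
    rw [streamPower, ← mul_div_assoc]
    gcongr
    exact max_le (Real.sqrt_nonneg _) (by linarith)

end streamPower

lemma tendsto_one_add_mul_div_of_tendsto_atTop {α : Type*} {l : Filter α} {f : α → ℝ} (a : ℝ)
    (hf : Tendsto f l atTop) :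
    Tendsto (fun t => (1 + a) * (1 + f t) / (1 + a + f t)) l (𝓝 (1 + a)) := by
  have hcorr : Tendsto (fun t => a * (1 + a) / (1 + a + f t)) l (𝓝 0) :=
    tendsto_const_nhds.div_atTop (tendsto_atTop_add_const_left _ _ hf)
  refine (by simpa using tendsto_const_nhds.sub hcorr :
    Tendsto (fun t => 1 + a - a * (1 + a) / (1 + a + f t)) l (𝓝 (1 + a))).congr' ?_
  filter_upwards [hf.eventually_gt_atTop (-(1 + a))] with t ht
  have : 1 + a + f t ≠ 0 := by linarith
  field_simp
  ring

/-- The paper's `l(μ)`, with `xₖ(μ) = streamPower (a k) (b k) μ`. -/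
def stationarityFn {ι : Type*} [Fintype ι] (a b : ι → ℝ) (E μ : ℝ) : ℝ :=
  -(1 / 2) * ∑ k, Real.logb 2 ((1 + a k) * (1 + b k * streamPower (a k) (b k) μ) /
      (1 + a k + b k * streamPower (a k) (b k) μ))
    + (1 / μ) * (E + (1 / 2) * ∑ k, streamPower (a k) (b k) μ)

section stationarityFn

variable {ι : Type*} [Fintype ι] {a b : ι → ℝ}

lemma continuousOn_stationarityFn (ha : ∀ k, 0 ≤ a k) (hb : ∀ k, 0 ≤ b k) (E : ℝ) :
    ContinuousOn (stationarityFn a b E) (Ioi 0) := by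
  have hbx : ∀ k μ, 0 ≤ b k * streamPower (a k) (b k) μ := fun k μ =>
    mul_nonneg (hb k) (streamPower_nonneg (hb k) μ)
  have hden : ∀ k μ, 0 < 1 + a k + b k * streamPower (a k) (b k) μ := fun k μ => by
    linarith [ha k, hbx k μ]
  have hratio : ∀ k μ, 0 < (1 + a k) * (1 + b k * streamPower (a k) (b k) μ) /
      (1 + a k + b k * streamPower (a k) (b k) μ) := fun k μ =>
    div_pos (mul_pos (by linarith [ha k]) (by linarith [hbx k μ])) (hden k μ)
  have hx_cont := fun k => continuous_streamPower (a := a k) (b := b k)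
  unfold stationarityFn
  fun_prop (disch := intro μ hμ; first
    | exact (hratio _ μ).ne' | exact (hden _ μ).ne' | exact ne_of_gt hμ)

lemma stationarityFn_pos (ha : ∀ k, 0 < a k) (hb : ∀ k, 0 < b k) {E μ : ℝ} (hE : 0 < E)
    (hμ : 0 < μ) (hμle : ∀ k, μ ≤ Real.log 2 * (1 + a k) / (a k * b k)) :
    0 < stationarityFn a b E μ := by
  have hzero : ∀ k, streamPower (a k) (b k) μ = 0 := fun k =>
    streamPower_eq_zero (ha k) (hb k) (hμle k)
  have hone : ∀ k, 1 + a k ≠ 0 := fun k => by linarith [ha k]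
  simp only [stationarityFn, hzero, mul_zero, add_zero, mul_one, div_self (hone _),
    Real.logb_one, Finset.sum_const_zero]
  positivity

lemma tendsto_stationarityFn_atTop (ha : ∀ k, 0 < a k) (hb : ∀ k, 0 < b k) (E : ℝ) :
    Tendsto (stationarityFn a b E) atTop (𝓝 (-(1 / 2) * ∑ k, Real.logb 2 (1 + a k))) := by
  have hrate : ∀ k, Tendsto (fun μ => Real.logb 2 ((1 + a k) * (1 + b k * streamPower (a k) (b k) μ)
      / (1 + a k + b k * streamPower (a k) (b k) μ))) atTop (𝓝 (Real.logb 2 (1 + a k))) :=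
    fun k => (Real.continuousAt_logb (by linarith [ha k])).tendsto.comp <|
      tendsto_one_add_mul_div_of_tendsto_atTop (a k) <|
        (tendsto_streamPower_atTop (ha k) (hb k)).const_mul_atTop (hb k)
  have henergy : Tendsto (fun μ => (1 / μ) * (E + (1 / 2) * ∑ k, streamPower (a k) (b k) μ))
      atTop (𝓝 0) := by
    have := (tendsto_inv_atTop_zero.mul_const E).add <|
      (tendsto_finsetSum Finset.univ fun k _ =>
        tendsto_streamPower_div_atTop (ha k).le (hb k).le).const_mul (1 / 2)
    simp only [zero_mul, Finset.sum_const_zero, mul_zero, add_zero] at this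
    refine this.congr fun μ => ?_
    rw [← Finset.sum_div]
    ring
  have := ((tendsto_finsetSum Finset.univ fun k _ => hrate k).const_mul (-(1 / 2))).add henergy
  rwa [add_zero] at this

end stationarityFn

lemma exists_gt_eq_zero_of_continuousOn_Ici {f : ℝ → ℝ} {m L : ℝ}
    (hf : ContinuousOn f (Ici m)) (hm : 0 < f m) (hlim : Tendsto f atTop (𝓝 L)) (hL : L < 0) :
    ∃ μ, m < μ ∧ f μ = 0 := by
  obtain ⟨μ₁, hneg, hmμ₁⟩ :=
    ((hlim.eventually_lt_const hL).and (eventually_ge_atTop m)).exists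
  obtain ⟨μ, hμ, hroot⟩ := intermediate_value_Ioc' hmμ₁ (hf.mono Icc_subset_Ici_self)
    ⟨hneg.le, hm⟩
  exact ⟨μ, hμ.1, hroot⟩

end

/-- properties of l(μ): continuity on (0,∞), positivity for
μ ≤ min_k ln2·(1+a_k)/(a_k b_k), negative limit at ∞, and existence of a root
μ* beyond the minimum threshold. -/
theorem stmt5 (D : ℕ) (hD : 1 ≤ D) (a b : Fin D → ℝ)
    (ha : ∀ k, 0 < a k) (hb : ∀ k, 0 < b k) (E : ℝ) (hE : 0 < E)
    (x : Fin D → ℝ → ℝ)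
    (hx : ∀ k μ, x k μ =
      (1 / (2 * b k)) * max 0 (Real.sqrt ((a k) ^ 2 + (4 / Real.log 2) * a k * b k * μ) - a k - 2))
    (l : ℝ → ℝ)
    (hl : ∀ μ, l μ =
      -(1 / 2) * ∑ k, Real.logb 2 ((1 + a k) * (1 + b k * x k μ) / (1 + a k + b k * x k μ))
      + (1 / μ) * (E + (1 / 2) * ∑ k, x k μ)) :
    ContinuousOn l (Set.Ioi 0) ∧
    (∀ μ, 0 < μ →
      μ ≤ (Finset.univ.inf' ⟨⟨0, hD⟩, Finset.mem_univ _⟩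
            fun k => Real.log 2 * (1 + a k) / (a k * b k)) → 0 < l μ) ∧
    Tendsto l atTop (nhds (-(1 / 2) * ∑ k, Real.logb 2 (1 + a k))) ∧
    (-(1 / 2) * ∑ k, Real.logb 2 (1 + a k) < 0) ∧
    (∃ μs, (Finset.univ.inf' ⟨⟨0, hD⟩, Finset.mem_univ _⟩
            fun k => Real.log 2 * (1 + a k) / (a k * b k)) < μs ∧ l μs = 0) := by
  obtain rfl : x = fun k => streamPower (a k) (b k) := funext fun k => funext (hx k)
  obtain rfl : l = stationarityFn a b E := funext hl
  set m := Finset.univ.inf' ⟨⟨0, hD⟩, Finset.mem_univ _⟩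
    fun k => Real.log 2 * (1 + a k) / (a k * b k)
  have hm : 0 < m := (Finset.lt_inf'_iff _).2 fun k _ => by
    have := Real.log_pos one_lt_two
    have := ha k
    have := hb k
    positivity
  have hcont := continuousOn_stationarityFn (fun k => (ha k).le) (fun k => (hb k).le) E
  have hpos : ∀ μ, 0 < μ → μ ≤ m → 0 < stationarityFn a b E μ := fun μ hμ hμm =>
    stationarityFn_pos ha hb hE hμ fun k => hμm.trans (Finset.inf'_le _ (Finset.mem_univ k))
  have hlim := tendsto_stationarityFn_atTop ha hb E
  have hneg : -(1 / 2) * ∑ k, Real.logb 2 (1 + a k) < 0 := by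
    have : 0 < ∑ k, Real.logb 2 (1 + a k) :=
      Finset.sum_pos (fun k _ => Real.logb_pos one_lt_two (by linarith [ha k]))
        ⟨⟨0, hD⟩, Finset.mem_univ _⟩
    linarith
  exact ⟨hcont, hpos, hlim, hneg, exists_gt_eq_zero_of_continuousOn_Ici
    (hcont.mono fun μ hμ => hm.trans_le hμ) (hpos m hm le_rfl) hlim hneg⟩
end

section
/- The function l(μ) defined as in the previous context is strictly decreasing on [max_k ln 2·(1+a_k)/(a_k b_k), ∞), hence its root μ* in that region (when x_k(μ*) > 0 for some k) is unique there. -/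
/-!
Write `F(y, μ)` for the right-hand side of `hl` with `x k μ` replaced by `y k`, so that
`l μ = F(x(μ), μ)`. For `μ ≥ max_k ln 2 (1 + a_k) / (a_k b_k)` the water level is above every
floor, and `x(μ)` solves `(1 + b_k x_k)(1 + a_k + b_k x_k) = a_k b_k μ / ln 2`, the stationarity
equation of `F(·, μ)`. Each rate `log ((1 + a)(1 + b y) / (1 + a + b y))` is concave in `y`, so
`x(μ)` minimises `F(·, μ)`; and `F(y, ·)` is strictly decreasing whenever `E + ½ Σ y_k > 0`.
Hence for `μ₁ < μ₂` in the region, `l μ₂ ≤ F(x(μ₁), μ₂) < F(x(μ₁), μ₁) = l μ₁`.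
-/

open Real Finset

lemma log_rate_sub_le {a b x y : ℝ} (ha : 0 ≤ a) (hx : 0 < 1 + b * x) (hy : 0 < 1 + b * y) :
    log ((1 + a) * (1 + b * y) / (1 + a + b * y)) - log ((1 + a) * (1 + b * x) / (1 + a + b * x))
      ≤ a * b * (y - x) / ((1 + b * x) * (1 + a + b * x)) := by
  have hx' : 0 < 1 + a + b * x := by linarith
  have hy' : 0 < 1 + a + b * y := by linarith
  rw [← log_div (by positivity) (by positivity)]
  refine (log_le_sub_one_of_pos (by positivity)).trans ?_
  rw [div_sub_one (by positivity), div_le_div_iff₀ (by positivity) (by positivity)]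
  -- the two sides differ by `a b² (y - x)² / ((1 + b x) (1 + a + b x) (1 + a + b y))`
  field_simp
  nlinarith [mul_nonneg (mul_nonneg ha (sq_nonneg (b * (y - x)))) (mul_pos hx hx').le]

lemma logb_rate_sub_le_of_stationary {a b μ x y : ℝ} (ha : 0 ≤ a) (hμ : 0 < μ)
    (hx : 0 < 1 + b * x) (hy : 0 < 1 + b * y)
    (hstat : (1 + b * x) * (1 + a + b * x) = a * b * μ / log 2) :
    logb 2 ((1 + a) * (1 + b * y) / (1 + a + b * y))
        - logb 2 ((1 + a) * (1 + b * x) / (1 + a + b * x)) ≤ (y - x) / μ := by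
  have hlog2 : 0 < log 2 := log_pos one_lt_two
  have hab : a * b ≠ 0 := by
    have : 0 < a * b * μ / log 2 := hstat ▸ mul_pos hx (by linarith)
    rintro h
    simp [h] at this
  rw [logb, logb, ← sub_div, div_le_iff₀ hlog2]
  calc _ ≤ a * b * (y - x) / ((1 + b * x) * (1 + a + b * x)) := log_rate_sub_le ha hx hy
    _ = (y - x) / μ * log 2 := by rw [hstat]; field_simp; exact mul_div_cancel_left₀ _ hab

noncomputable def waterFilling (a b μ : ℝ) : ℝ :=
  (1 / (2 * b)) * max 0 (√(a ^ 2 + (4 / log 2) * a * b * μ) - a - 2)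

lemma waterFilling_nonneg {b : ℝ} (hb : 0 < b) (a μ : ℝ) : 0 ≤ waterFilling a b μ :=
  mul_nonneg (by positivity) (le_max_left _ _)

lemma waterFilling_stationary {a b μ : ℝ} (ha : 0 < a) (hb : 0 < b)
    (hμ : log 2 * (1 + a) / (a * b) ≤ μ) :
    (1 + b * waterFilling a b μ) * (1 + a + b * waterFilling a b μ) = a * b * μ / log 2 := by
  have hlog2 : 0 < log 2 := log_pos one_lt_two
  have hgap : 4 * (1 + a) ≤ 4 / log 2 * a * b * μ := by
    rw [div_le_iff₀ (by positivity)] at hμ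
    rw [mul_assoc, mul_assoc, div_mul_eq_mul_div, le_div_iff₀ hlog2]
    nlinarith
  have hlevel : a + 2 ≤ √(a ^ 2 + 4 / log 2 * a * b * μ) :=
    le_sqrt_of_sq_le (by nlinarith)
  have hs := sq_sqrt (show 0 ≤ a ^ 2 + 4 / log 2 * a * b * μ by nlinarith)
  set s := √(a ^ 2 + 4 / log 2 * a * b * μ)
  have hbw : b * (1 / (2 * b) * max 0 (s - a - 2)) = (s - a - 2) / 2 := by
    rw [max_eq_right (by linarith)]
    field_simp
  rw [waterFilling, hbw]
  linear_combination hs / 4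

section Lagrangian

variable {ι : Type*} [Fintype ι] (a b : ι → ℝ) (E : ℝ)

noncomputable def lagrangian (μ : ℝ) (y : ι → ℝ) : ℝ :=
  -(1 / 2) * ∑ k, logb 2 ((1 + a k) * (1 + b k * y k) / (1 + a k + b k * y k))
    + (1 / μ) * (E + (1 / 2) * ∑ k, y k)

variable {a b E}

lemma lagrangian_lt_of_lt {μ₁ μ₂ : ℝ} {y : ι → ℝ} (hμ₁ : 0 < μ₁) (hμ : μ₁ < μ₂)
    (hy : 0 < E + (1 / 2) * ∑ k, y k) :
    lagrangian a b E μ₂ y < lagrangian a b E μ₁ y := by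
  unfold lagrangian
  gcongr

lemma lagrangian_le_of_stationary {μ : ℝ} {x y : ι → ℝ} (ha : ∀ k, 0 ≤ a k) (hμ : 0 < μ)
    (hx : ∀ k, 0 < 1 + b k * x k) (hy : ∀ k, 0 < 1 + b k * y k)
    (hstat : ∀ k, (1 + b k * x k) * (1 + a k + b k * x k) = a k * b k * μ / log 2) :
    lagrangian a b E μ x ≤ lagrangian a b E μ y := by
  have hsum := sum_le_sum fun k (_ : k ∈ univ) =>
    logb_rate_sub_le_of_stationary (ha k) hμ (hx k) (hy k) (hstat k)
  rw [sum_sub_distrib, ← sum_div, sum_sub_distrib] at hsum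
  unfold lagrangian
  linear_combination hsum / 2

end Lagrangian

/-- l(μ) is strictly decreasing on [max_k ln2·(1+a_k)/(a_k b_k), ∞),
hence its root there is unique. -/
theorem stmt6 (D : ℕ) (hD : 1 ≤ D) (a b : Fin D → ℝ)
    (ha : ∀ k, 0 < a k) (hb : ∀ k, 0 < b k) (E : ℝ) (hE : 0 < E)
    (x : Fin D → ℝ → ℝ)
    (hx : ∀ k μ, x k μ =
      (1 / (2 * b k)) * max 0 (Real.sqrt ((a k) ^ 2 + (4 / Real.log 2) * a k * b k * μ) - a k - 2))
    (l : ℝ → ℝ)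
    (hl : ∀ μ, l μ =
      -(1 / 2) * ∑ k, Real.logb 2 ((1 + a k) * (1 + b k * x k μ) / (1 + a k + b k * x k μ))
      + (1 / μ) * (E + (1 / 2) * ∑ k, x k μ)) :
    StrictAntiOn l
      (Set.Ici (Finset.univ.sup' ⟨⟨0, hD⟩, Finset.mem_univ _⟩
        fun k => Real.log 2 * (1 + a k) / (a k * b k))) ∧
    (∀ μ₁ ∈ Set.Ici (Finset.univ.sup' ⟨⟨0, hD⟩, Finset.mem_univ _⟩
        fun k => Real.log 2 * (1 + a k) / (a k * b k)),
     ∀ μ₂ ∈ Set.Ici (Finset.univ.sup' ⟨⟨0, hD⟩, Finset.mem_univ _⟩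
        fun k => Real.log 2 * (1 + a k) / (a k * b k)),
      l μ₁ = 0 → l μ₂ = 0 → μ₁ = μ₂) := by
  set M := univ.sup' _ fun k => log 2 * (1 + a k) / (a k * b k)
  have hM (k : Fin D) : log 2 * (1 + a k) / (a k * b k) ≤ M :=
    le_sup' (fun k => log 2 * (1 + a k) / (a k * b k)) (mem_univ k)
  have hM₀ : 0 < M := by
    have := ha ⟨0, hD⟩
    have := hb ⟨0, hD⟩
    exact lt_of_lt_of_le (by positivity) (hM ⟨0, hD⟩)
  have hxw : ∀ k μ, x k μ = waterFilling (a k) (b k) μ := hx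
  have hx₀ (k : Fin D) (μ : ℝ) : 0 ≤ x k μ := hxw k μ ▸ waterFilling_nonneg (hb k) _ _
  have hbx₀ (k : Fin D) (μ : ℝ) : 0 < 1 + b k * x k μ := by
    have := mul_nonneg (hb k).le (hx₀ k μ)
    linarith
  have hSA : StrictAntiOn l (Set.Ici M) := by
    intro μ₁ (h₁ : M ≤ μ₁) μ₂ (h₂ : M ≤ μ₂) hμ
    have hE' : 0 < E + (1 / 2) * ∑ k, x k μ₁ := by
      have := sum_nonneg fun k (_ : k ∈ univ) => hx₀ k μ₁
      positivity
    calc l μ₂ = lagrangian a b E μ₂ (x · μ₂) := hl μ₂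
      _ ≤ lagrangian a b E μ₂ (x · μ₁) :=
        lagrangian_le_of_stationary (fun k => (ha k).le) (hM₀.trans_le h₂) (hbx₀ · μ₂)
          (hbx₀ · μ₁) fun k => hxw k μ₂ ▸ waterFilling_stationary (ha k) (hb k) ((hM k).trans h₂)
      _ < lagrangian a b E μ₁ (x · μ₁) := lagrangian_lt_of_lt (hM₀.trans_le h₁) hμ hE'
      _ = l μ₁ := (hl μ₁).symm
  exact ⟨hSA, fun μ₁ h₁ μ₂ h₂ e₁ e₂ => hSA.injOn h₁ h₂ (e₁.trans e₂.symm)⟩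
end

section
/- Let q, α, β, d, σ₁², σ₂² > 0 and ε ∈ [0,1). The stationarity equation ((1−ε)/2)·(α/(ln2·σ₁²))·[1/(1+(α/σ₁²)q) − 1/(1+(α/σ₁²)q+(β/σ₂²)d)] = ν₂ with ν₂ = 1/μ₂ > 0 has, whenever it admits a positive solution in q, the solution q = (σ₁²/(2α))·[√((βd/σ₂²)² + 2(1−ε)βdαμ₂/(σ₁²σ₂² ln2)) − βd/σ₂² − 2]. -/
/-!
Put `x = 1 + (α/σ₁²) q` and `b = βd/σ₂²`. Since `1/x - 1/(x+b) = b/(x(x+b))`, the stationarity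
equation says that `x(x+b) = k` with `k = ((1-ε)/2)(α/(ln 2 σ₁²)) b μ₂`, a quadratic in `x` whose
completed square is `(2x+b)² = b² + 4k`. As `2x + b > 0`, taking the square root determines `x`,
hence `q`.
-/

theorem two_mul_add_eq_sqrt_of_mul_add_eq {x b k : ℝ} (hx : 0 ≤ 2 * x + b)
    (h : x * (x + b) = k) : 2 * x + b = √(b ^ 2 + 4 * k) := by
  rw [← h, show b ^ 2 + 4 * (x * (x + b)) = (2 * x + b) ^ 2 by ring, Real.sqrt_sq hx]

theorem mul_add_eq_of_mul_one_div_sub_one_div_eq {c x b ν : ℝ} (hx : x ≠ 0) (hxb : x + b ≠ 0)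
    (hν : ν ≠ 0) (h : c * (1 / x - 1 / (x + b)) = 1 / ν) : x * (x + b) = c * b * ν := by
  rw [one_div, one_div, inv_sub_inv hx hxb, add_sub_cancel_left] at h
  field_simp at h
  linear_combination -h

theorem stmt11_general (q α β d s1 s2 ε μ2 : ℝ)
    (hq : 0 < q) (hα : 0 < α) (hβ : 0 < β) (hd : 0 < d)
    (hs1 : 0 < s1) (hs2 : 0 < s2) (hμ2 : 0 < μ2)
    (hstat : ((1 - ε) / 2) * (α / (Real.log 2 * s1)) *
      (1 / (1 + (α / s1) * q) - 1 / (1 + (α / s1) * q + (β / s2) * d)) = 1 / μ2) :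
    q = (s1 / (2 * α)) *
      (Real.sqrt ((β * d / s2) ^ 2 + 2 * (1 - ε) * β * d * α * μ2 / (s1 * s2 * Real.log 2))
        - β * d / s2 - 2) := by
  set x := 1 + (α / s1) * q with hx_def
  have hb : (β / s2) * d = β * d / s2 := by ring
  rw [hb] at hstat
  have hx : 0 < x := by positivity
  have hxb : 0 < x + β * d / s2 := by positivity
  have hquad := mul_add_eq_of_mul_one_div_sub_one_div_eq hx.ne' hxb.ne' hμ2.ne' hstat
  have hroot := two_mul_add_eq_sqrt_of_mul_add_eq (by positivity) hquad
  have hdisc : (β * d / s2) ^ 2 + 4 * ((1 - ε) / 2 * (α / (Real.log 2 * s1)) * (β * d / s2) * μ2)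
      = (β * d / s2) ^ 2 + 2 * (1 - ε) * β * d * α * μ2 / (s1 * s2 * Real.log 2) := by
    ring
  rw [← hdisc, ← hroot, hx_def]
  field_simp
  ring

/-- the positive solution of the KKT stationarity equation in the
source power q is given by the closed-form expression. -/
theorem stmt11 (q α β d s1 s2 ε μ2 : ℝ)
    (hq : 0 < q) (hα : 0 < α) (hβ : 0 < β) (hd : 0 < d)
    (hs1 : 0 < s1) (hs2 : 0 < s2) (hε : ε ∈ Set.Ico (0 : ℝ) 1) (hμ2 : 0 < μ2)
    (hstat : ((1 - ε) / 2) * (α / (Real.log 2 * s1)) *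
      (1 / (1 + (α / s1) * q) - 1 / (1 + (α / s1) * q + (β / s2) * d)) = 1 / μ2) :
    q = (s1 / (2 * α)) *
      (Real.sqrt ((β * d / s2) ^ 2 + 2 * (1 - ε) * β * d * α * μ2 / (s1 * s2 * Real.log 2))
        - β * d / s2 - 2) :=
  stmt11_general q α β d s1 s2 ε μ2 hq hα hβ hd hs1 hs2 hμ2 hstat
end
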